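/- Every finite monoid that is both R-trivial and a block-group is J-trivial. -/

import Mathlib

/-- A monoid is `R`-trivial if `a M = b M` implies `a = b`. -/
def IsRTrivial (M : Type*) [Monoid M] : Prop :=
  ∀ a b : M, (Set.range fun x => a * x) = (Set.range fun x => b * x) → a = b

/-- A monoid is `J`-trivial if `M a M = M b M` implies `a = b`. -/
def IsJTrivial (M : Type*) [Monoid M] : Prop :=
  ∀ a b : M,
    (Set.range fun p : M × M => p.1 * a * p.2) = (Set.range fun p : M × M => p.1 * b * p.2) →
      a = b

/-- A monoid is a block-group if every `R`-class and every `L`-class contains at most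
one idempotent. -/
def IsBlockGroup (M : Type*) [Monoid M] : Prop :=
  ∀ e f : M, IsIdempotentElem e → IsIdempotentElem f →
    (((Set.range fun x => e * x) = Set.range fun x => f * x) ∨
      ((Set.range fun x => x * e) = Set.range fun x => x * f)) → e = f

/-!
If `a J b`, say `a = x b y` and `b = u a v`, then `a = (x u) a (v y)`; passing to an idempotent
power shows `a = a (v y)^ω`, so `a R a v` and R-triviality gives `a v = a`, i.e. `b = u a`.
Symmetrically `a = x b`, so `a L b`. The idempotents `e = (x u)^ω` and `f = (u x)^ω` are then
`L`-related (R-triviality gives `e x = e` and `f u = f`), hence equal in a block-group, and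
`a = e a = e x b = e b = f b = b`.
-/

section Monoid

variable {M : Type*} [Monoid M]

theorem pow_add_add_mul_eq_of_pow_add_eq {a : M} {m p : ℕ} (h : a ^ (m + p) = a ^ m) (k t : ℕ) :
    a ^ (m + k + p * t) = a ^ (m + k) := by
  induction t with
  | zero => simp
  | succ t ih =>
    calc a ^ (m + k + p * (t + 1)) = a ^ (m + p) * a ^ (k + p * t) := by
          rw [← pow_add]; ring_nf
      _ = a ^ (m + k) := by rw [h, ← pow_add, ← add_assoc, ih]

theorem exists_isIdempotentElem_pow [Finite M] (a : M) : ∃ n ≠ 0, IsIdempotentElem (a ^ n) := by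
  obtain ⟨i, j, hij, h⟩ := Finite.exists_ne_map_eq_of_infinite (a ^ · : ℕ → M)
  wlog hlt : i < j generalizing i j
  · exact this j i hij.symm h.symm (by omega)
  have hp : 0 < j - i := by omega
  have hperiod : a ^ (i + (j - i)) = a ^ i := by rw [Nat.add_sub_cancel' hlt.le, h]
  -- `a ^ n` is idempotent once `n ≥ i` is a multiple of the period `j - i`.
  have hle : i ≤ (j - i) * (i + 1) := le_trans i.le_succ (Nat.le_mul_of_pos_left _ hp)
  obtain ⟨k, hk⟩ := Nat.exists_eq_add_of_le hle
  refine ⟨(j - i) * (i + 1), (Nat.mul_pos hp i.succ_pos).ne', ?_⟩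
  rw [IsIdempotentElem, ← pow_add]
  nth_rw 1 [hk]
  rw [pow_add_add_mul_eq_of_pow_add_eq hperiod, hk]

theorem exists_isIdempotentElem_pow_pow [Finite M] (a b : M) :
    ∃ n ≠ 0, IsIdempotentElem (a ^ n) ∧ IsIdempotentElem (b ^ n) := by
  obtain ⟨m, hm, ha⟩ := exists_isIdempotentElem_pow a
  obtain ⟨n, hn, hb⟩ := exists_isIdempotentElem_pow b
  refine ⟨m * n, mul_ne_zero hm hn, ?_, ?_⟩
  · rw [pow_mul]; exact ha.pow n
  · rw [mul_comm, pow_mul]; exact hb.pow m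

theorem pow_mul_mul_pow_eq_self {s a t : M} (h : s * a * t = a) (n : ℕ) :
    s ^ n * a * t ^ n = a := by
  induction n with
  | zero => simp
  | succ n ih =>
    calc s ^ (n + 1) * a * t ^ (n + 1) = s ^ n * (s * a * t) * t ^ n := by
          rw [pow_succ, pow_succ']; simp only [mul_assoc]
      _ = a := by rw [h, ih]

theorem range_mul_left_eq_of_mul_eq {a b m n : M} (ha : b * m = a) (hb : a * n = b) :
    (Set.range fun x => a * x) = Set.range fun x => b * x := by
  apply Set.Subset.antisymm
  · rintro _ ⟨x, rfl⟩; exact ⟨m * x, by simp only [← mul_assoc, ha]⟩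
  · rintro _ ⟨x, rfl⟩; exact ⟨n * x, by simp only [← mul_assoc, hb]⟩

theorem range_mul_right_eq_of_mul_eq {a b m n : M} (ha : m * b = a) (hb : n * a = b) :
    (Set.range fun x => x * a) = Set.range fun x => x * b := by
  apply Set.Subset.antisymm
  · rintro _ ⟨x, rfl⟩; exact ⟨x * m, by simp only [mul_assoc, ha]⟩
  · rintro _ ⟨x, rfl⟩; exact ⟨x * n, by simp only [mul_assoc, hb]⟩

theorem IsBlockGroup.eq_of_mul_eq_of_mul_eq (hBG : IsBlockGroup M) {e f x u : M}
    (he : IsIdempotentElem e) (hf : IsIdempotentElem f) (hxf : x * f = e) (hue : u * e = f) :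
    e = f :=
  hBG e f he hf (Or.inr (range_mul_right_eq_of_mul_eq hxf hue))

namespace IsRTrivial

theorem eq_of_mul_eq_of_mul_eq (hR : IsRTrivial M) {a b m n : M} (ha : b * m = a)
    (hb : a * n = b) : a = b :=
  hR a b (range_mul_left_eq_of_mul_eq ha hb)

theorem mul_eq_of_mul_mul_eq (hR : IsRTrivial M) {a t m : M} (h : a * t * m = a) : a * t = a :=
  hR.eq_of_mul_eq_of_mul_eq rfl h

theorem mul_eq_of_sandwich [Finite M] (hR : IsRTrivial M) {s a t : M} (h : s * a * t = a) :
    a * t = a := by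
  obtain ⟨n, hn, hidem⟩ := exists_isIdempotentElem_pow t
  obtain ⟨k, rfl⟩ := Nat.exists_eq_succ_of_ne_zero hn
  have hat : a * t ^ (k + 1) = a := by
    rw [← pow_mul_mul_pow_eq_self h (k + 1), mul_assoc, hidem.eq]
  exact hR.mul_eq_of_mul_mul_eq (m := t ^ k) (by rwa [mul_assoc, ← pow_succ'])

theorem pow_mul_eq_pow (hR : IsRTrivial M) {x u : M} {n : ℕ} (hn : n ≠ 0)
    (he : IsIdempotentElem ((x * u) ^ n)) : (x * u) ^ n * x = (x * u) ^ n := by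
  obtain ⟨k, rfl⟩ := Nat.exists_eq_succ_of_ne_zero hn
  refine hR.mul_eq_of_mul_mul_eq (m := u * (x * u) ^ k) ?_
  rw [mul_assoc, ← mul_assoc x, ← pow_succ', he.eq]

theorem mul_eq_of_mul_mul_eq_of_mul_mul_eq [Finite M] (hR : IsRTrivial M) {a b x y u v : M}
    (hxy : x * b * y = a) (huv : u * a * v = b) : u * a = b := by
  have hsandwich : x * u * a * (v * y) = a := by
    rw [← huv] at hxy; simpa only [mul_assoc] using hxy
  have hav : a * v = a :=
    hR.mul_eq_of_mul_mul_eq (m := y) (by rw [mul_assoc]; exact hR.mul_eq_of_sandwich hsandwich)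
  rwa [mul_assoc, hav] at huv

theorem eq_of_mul_eq_of_mul_eq_of_isBlockGroup [Finite M] (hR : IsRTrivial M)
    (hBG : IsBlockGroup M) {a b x u : M} (ha : x * b = a) (hb : u * a = b) : a = b := by
  obtain ⟨N, hN, he, hf⟩ := exists_isIdempotentElem_pow_pow (x * u) (u * x)
  have hea : (x * u) ^ N * a = a := by
    simpa using pow_mul_mul_pow_eq_self (s := x * u) (a := a) (t := 1)
      (by rw [mul_one, mul_assoc, hb, ha]) N
  have hfb : (u * x) ^ N * b = b := by
    simpa using pow_mul_mul_pow_eq_self (s := u * x) (a := b) (t := 1)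
      (by rw [mul_one, mul_assoc, ha, hb]) N
  have hex := hR.pow_mul_eq_pow hN he
  have hef : (x * u) ^ N = (u * x) ^ N :=
    hBG.eq_of_mul_eq_of_mul_eq he hf (by rw [← mul_pow_mul, hex])
      (by rw [← mul_pow_mul, hR.pow_mul_eq_pow hN hf])
  calc a = (x * u) ^ N * x * b := by rw [mul_assoc, ha, hea]
    _ = b := by rw [hex, hef, hfb]

end IsRTrivial

end Monoid

theorem isJTrivial_of_isRTrivial_of_isBlockGroup
    (M : Type*) [Monoid M] [Finite M] (hR : IsRTrivial M) (hBG : IsBlockGroup M) :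
    IsJTrivial M := by
  intro a b hab
  obtain ⟨⟨x, y⟩, hxy⟩ : a ∈ Set.range fun p : M × M => p.1 * b * p.2 :=
    hab ▸ ⟨(1, 1), by simp⟩
  obtain ⟨⟨u, v⟩, huv⟩ : b ∈ Set.range fun p : M × M => p.1 * a * p.2 :=
    hab ▸ ⟨(1, 1), by simp⟩
  exact hR.eq_of_mul_eq_of_mul_eq_of_isBlockGroup hBG
    (hR.mul_eq_of_mul_mul_eq_of_mul_mul_eq huv hxy)
    (hR.mul_eq_of_mul_mul_eq_of_mul_mul_eq hxy huv)
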